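/- Let E, F, F' be Banach spaces with F continuously embedded in F', let A : E → F be a compact linear operator and B : F → F' a bounded linear operator such that B(Au) = Au (as elements of F') for every u ∈ E (i.e., the range of A is contained in the kernel of Id − B). Then for every η > 0 there exists C_η > 0 such that for all u ∈ E: ‖Au‖_F ≤ η‖u‖_E + C_η‖B(Au)‖_{F'}. -/
import Mathlib
open Topology


/-- Ehrling-type lemma.  Let `E, F, F'` be Banach spaces, `j : F → F'` a continuous
linear embedding, `A : E → F` a compact linear operator, and `B : F → F'` a bounded
linear operator such that `B(Au) = Au` (as elements of `F'`, i.e. `B(Au) = j(Au)`) for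
all `u`.  Then for every `η > 0` there is `C_η > 0` with
`‖Au‖_F ≤ η‖u‖_E + C_η‖B(Au)‖_{F'}` for all `u ∈ E`. -/
theorem ehrling_compactness_lemma
    {E F F' : Type*}
    [NormedAddCommGroup E] [NormedSpace ℝ E] [CompleteSpace E]
    [NormedAddCommGroup F] [NormedSpace ℝ F] [CompleteSpace F]
    [NormedAddCommGroup F'] [NormedSpace ℝ F'] [CompleteSpace F']
    (j : F →L[ℝ] F') (hj : Function.Injective j)
    (A : E →L[ℝ] F) (hA : IsCompactOperator (⇑A))
    (B : F →L[ℝ] F') (hB : ∀ u : E, B (A u) = j (A u)) :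
    ∀ η : ℝ, 0 < η → ∃ C : ℝ, 0 < C ∧
      ∀ u : E, ‖A u‖ ≤ η * ‖u‖ + C * ‖B (A u)‖ := by
  intro η hη
  by_contra hcon
  push_neg at hcon
  choose u hu using fun n : ℕ => hcon (n + 1) (by positivity)
  have hApos : ∀ n : ℕ, 0 < ‖A (u n)‖ := by
    intro n
    have h := hu n
    have h1 : (0:ℝ) ≤ η * ‖u n‖ := by positivity
    have h2 : (0:ℝ) ≤ ((n:ℝ) + 1) * ‖B (A (u n))‖ := by positivity
    linarith
  set v : ℕ → E := fun n => ‖A (u n)‖⁻¹ • u n with hv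
  have hAveq : ∀ n : ℕ, A (v n) = ‖A (u n)‖⁻¹ • A (u n) := by
    intro n; simp [hv, map_smul]
  have hAv : ∀ n : ℕ, ‖A (v n)‖ = 1 := by
    intro n
    rw [hAveq n, norm_smul, norm_inv, norm_norm]
    exact inv_mul_cancel₀ (hApos n).ne'
  have hvnorm : ∀ n : ℕ, ‖v n‖ = ‖u n‖ / ‖A (u n)‖ := by
    intro n
    rw [hv]
    simp [norm_smul, div_eq_inv_mul]
  have hvball : ∀ n : ℕ, ‖v n‖ ≤ 1 / η := by
    intro n
    rw [hvnorm n, div_le_div_iff₀ (hApos n) hη]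
    have h := hu n
    have h2 : (0:ℝ) ≤ ((n:ℝ) + 1) * ‖B (A (u n))‖ := by positivity
    nlinarith
  have hBv : ∀ n : ℕ, ‖B (A (v n))‖ ≤ 1 / ((n:ℝ) + 1) := by
    intro n
    have hposn : (0:ℝ) < (n:ℝ) + 1 := by positivity
    rw [hAveq n, map_smul, norm_smul, norm_inv, norm_norm]
    rw [inv_mul_eq_div, div_le_div_iff₀ (hApos n) hposn]
    have h := hu n
    have h1 : (0:ℝ) ≤ η * ‖u n‖ := by positivity
    nlinarith
  -- compactness
  have hS : Bornology.IsBounded (Metric.closedBall (0:E) (1/η)) :=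
    Metric.isBounded_closedBall
  have hK : IsCompact (closure (A '' Metric.closedBall (0:E) (1/η))) :=
    hA.isCompact_closure_image_of_bounded hS
  have hmem : ∀ n : ℕ, A (v n) ∈ closure (A '' Metric.closedBall (0:E) (1/η)) := by
    intro n
    apply subset_closure
    exact ⟨v n, by simpa [Metric.mem_closedBall] using hvball n, rfl⟩
  obtain ⟨a, -, φ, hφ, hconv⟩ := hK.tendsto_subseq hmem
  have hna : ‖a‖ = 1 := by
    have h1 : Filter.Tendsto (fun n => ‖A (v (φ n))‖) Filter.atTop (𝓝 ‖a‖) :=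
      (continuous_norm.continuousAt.tendsto).comp hconv
    have h2 : Filter.Tendsto (fun _ : ℕ => (1:ℝ)) Filter.atTop (𝓝 ‖a‖) := by
      simpa [hAv] using h1
    exact tendsto_nhds_unique h2 tendsto_const_nhds |>.symm ▸ rfl
  have hja : j a = 0 := by
    have h1 : Filter.Tendsto (fun n => j (A (v (φ n)))) Filter.atTop (𝓝 (j a)) :=
      (j.continuous.continuousAt.tendsto).comp hconv
    have h2 : Filter.Tendsto (fun n => B (A (v (φ n)))) Filter.atTop (𝓝 (j a)) := by
      simpa [hB] using h1
    have h3 : Filter.Tendsto (fun n => B (A (v (φ n)))) Filter.atTop (𝓝 0) := by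
      rw [tendsto_zero_iff_norm_tendsto_zero]
      refine squeeze_zero (fun n => norm_nonneg _)
        (g := fun n : ℕ => 1 / ((n:ℝ) + 1)) (fun n => ?_)
        tendsto_one_div_add_atTop_nhds_zero_nat
      refine (hBv (φ n)).trans (one_div_le_one_div_of_le (by positivity) ?_)
      have hn : n ≤ φ n := hφ.le_apply
      have : (n:ℝ) ≤ (φ n : ℝ) := by exact_mod_cast hn
      linarith
    exact tendsto_nhds_unique h2 h3
  have : a = 0 := hj (by simpa using hja)
  rw [this] at hna
  simp at hna
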